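/- arXiv:2402.03088 — 5 statements merged into one kernel-verified Lean document; each statement's English description precedes it below -/
import Mathlib

section
/- Let H_A and H_B be finite-dimensional complex Hilbert spaces, let ξ = |ν⟩⟨ν| be a pure state on H_B, and let N be a quantum channel (completely positive trace-preserving linear map) on H_A ⊗ H_B. Define the channel N_A on H_A by N_A(ρ) = Tr_B[N(ρ ⊗ ξ)]. If N_A is a unitary channel, i.e. N_A(ρ) = U ρ U* for some unitary U on H_A, then there exists a quantum channel N_B on H_B such that N(ρ ⊗ ξ) = N_A(ρ) ⊗ N_B(ξ) for all states ρ on H_A. -/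
/-!
Write `N` in Kraus form, `N X = ∑ κ, K κ * X * (K κ)ᴴ`. Then
`Tr_B N(ρ ⊗ |ν⟩⟨ν|) = ∑ κ b, A κ b * ρ * (A κ b)ᴴ` with `A κ b = (1 ⊗ ⟨b|) K κ (1 ⊗ |ν⟩)`,
so the operators `A κ b` form a Kraus decomposition of `ρ ↦ U ρ Uᴴ`. The Choi matrix of that
channel is `vec U (vec U)ᴴ`, which has rank one, so every `A κ b` is a multiple `c κ b • U`.
Substituting back, `N(ρ ⊗ ξ) = U ρ Uᴴ ⊗ σ` with `σ = ∑ κ, c κ (c κ)ᴴ`, and `N_B X = tr X • σ`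
is a channel doing the job.
-/

open Matrix BigOperators
open scoped Kronecker ComplexOrder

noncomputable section

/-- Partial trace over the second tensor factor. -/
def ptraceB {a b : Type*} [Fintype b] (M : Matrix (a × b) (a × b) ℂ) : Matrix a a ℂ :=
  Matrix.of fun i j => ∑ k, M (i, k) (j, k)

/-- Partial trace over the first tensor factor. -/
def ptraceA {a b : Type*} [Fintype a] (M : Matrix (a × b) (a × b) ℂ) : Matrix b b ℂ :=
  Matrix.of fun i j => ∑ k, M (k, i) (k, j)

/-- A quantum state: positive semidefinite with trace one. -/
def IsState {m : Type*} [Fintype m] (ρ : Matrix m m ℂ) : Prop :=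
  ρ.PosSemidef ∧ ρ.trace = 1

/-- A quantum channel: trace-preserving and completely positive (Kraus form). -/
def IsCPTP {m : Type*} [Fintype m] (Φ : Matrix m m ℂ →ₗ[ℂ] Matrix m m ℂ) : Prop :=
  (∀ X, (Φ X).trace = X.trace) ∧
  ∃ (k : ℕ) (K : Fin k → Matrix m m ℂ), ∀ X, Φ X = ∑ i, K i * X * (K i)ᴴ

def IsUnitary {m : Type*} [Fintype m] [DecidableEq m] (U : Matrix m m ℂ) : Prop :=
  U * Uᴴ = 1 ∧ Uᴴ * U = 1

namespace Matrix

variable {ι m n : Type*} [Fintype ι] [Fintype n]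

theorem mul_vecMulVec_star_mul_conjTranspose (Q : Matrix m n ℂ) (x : n → ℂ) :
    Q * vecMulVec x (star x) * Qᴴ = vecMulVec (Q *ᵥ x) (star (Q *ᵥ x)) := by
  rw [mul_vecMulVec, vecMulVec_mul, star_mulVec]

theorem eq_zero_of_sum_vecMulVec_star_eq_zero (z : ι → n → ℂ)
    (h : ∑ j, vecMulVec (z j) (star (z j)) = 0) (j : ι) : z j = 0 := by
  have htr : ∑ j, z j ⬝ᵥ star (z j) = 0 := by
    simpa [trace_sum] using congrArg trace h
  rw [Finset.sum_eq_zero_iff_of_nonneg fun j _ => dotProduct_self_star_nonneg (z j)] at htr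
  exact dotProduct_self_star_eq_zero.mp (htr j (Finset.mem_univ j))

theorem exists_eq_smul_of_sum_vecMulVec_star_eq (x : ι → n → ℂ) (y : n → ℂ)
    (h : ∑ j, vecMulVec (x j) (star (x j)) = vecMulVec y (star y)) (j : ι) :
    ∃ c : ℂ, x j = c • y := by
  classical
  by_cases hy : y = 0
  · subst hy
    refine ⟨0, ?_⟩
    rw [zero_smul]
    exact eq_zero_of_sum_vecMulVec_star_eq_zero x (by simpa using h) j
  set c := star y ⬝ᵥ y
  have hc : c ≠ 0 := fun h0 => hy (dotProduct_star_self_eq_zero.mp h0)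
  -- `Q` is `c` times the projection onto the orthogonal complement of `y`.
  set Q : Matrix n n ℂ := c • 1 - vecMulVec y (star y)
  have hQ : ∀ v, Q *ᵥ v = c • v - (star y ⬝ᵥ v) • y := fun v => by
    simp [Q, sub_mulVec, vecMulVec_mulVec, smul_mulVec]
  have hQx : Q *ᵥ x j = 0 := by
    refine eq_zero_of_sum_vecMulVec_star_eq_zero (fun j => Q *ᵥ x j) ?_ j
    simp_rw [← mul_vecMulVec_star_mul_conjTranspose]
    rw [← Finset.sum_mul, ← Finset.mul_sum, h, mul_vecMulVec_star_mul_conjTranspose, hQ, sub_self]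
    simp
  refine ⟨c⁻¹ * (star y ⬝ᵥ x j), ?_⟩
  rw [hQ, sub_eq_zero] at hQx
  rw [mul_smul, ← hQx, inv_smul_smul₀ hc]

theorem mul_single_one_mul_conjTranspose_apply [DecidableEq n] (A B : Matrix m n ℂ) (i j : n)
    (a a' : m) : (A * single i j (1 : ℂ) * Bᴴ) a a' = A a i * star (B a' j) := by
  simp [mul_apply, single_apply, ite_and, Finset.sum_ite_eq]

theorem exists_eq_smul_of_sum_conj_eq_conj [Fintype m] (A : ι → Matrix m n ℂ)
    (U : Matrix m n ℂ) (h : ∀ ρ : Matrix n n ℂ, ∑ j, A j * ρ * (A j)ᴴ = U * ρ * Uᴴ) (j : ι) :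
    ∃ c : ℂ, A j = c • U := by
  classical
  have hChoi : ∑ j, vecMulVec (vec (A j)) (star (vec (A j))) =
      vecMulVec (vec U) (star (vec U)) := by
    ext ⟨i, a⟩ ⟨i', a'⟩
    have := congrFun (congrFun (h (single i i' 1)) a) a'
    simpa [Matrix.sum_apply, mul_single_one_mul_conjTranspose_apply, vecMulVec_apply] using this
  obtain ⟨c, hc⟩ := exists_eq_smul_of_sum_vecMulVec_star_eq _ _ hChoi j
  exact ⟨c, vec_inj.mp hc⟩

end Matrix

theorem isCPTP_of_kraus {ι n : Type*} [Fintype ι] [Fintype n]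
    (Φ : Matrix n n ℂ →ₗ[ℂ] Matrix n n ℂ) (htr : ∀ X, (Φ X).trace = X.trace)
    (K : ι → Matrix n n ℂ) (hK : ∀ X, Φ X = ∑ i, K i * X * (K i)ᴴ) : IsCPTP Φ :=
  ⟨htr, Fintype.card ι, K ∘ (Fintype.equivFin ι).symm, fun X => by
    rw [hK, ← (Fintype.equivFin ι).symm.sum_comp]; rfl⟩

def replacementChannel {n : Type*} [Fintype n] (σ : Matrix n n ℂ) :
    Matrix n n ℂ →ₗ[ℂ] Matrix n n ℂ :=
  (Matrix.traceLinearMap n ℂ ℂ).smulRight σ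

@[simp]
theorem replacementChannel_apply {n : Type*} [Fintype n] (σ X : Matrix n n ℂ) :
    replacementChannel σ X = X.trace • σ := rfl

theorem isCPTP_replacementChannel {ι n : Type*} [Fintype ι] [Fintype n] [DecidableEq n]
    (c : ι → n → ℂ) (h : (∑ κ, vecMulVec (c κ) (star (c κ))).trace = 1) :
    IsCPTP (replacementChannel (∑ κ, vecMulVec (c κ) (star (c κ)))) := by
  refine isCPTP_of_kraus _ (fun X => by simp [h])
    (fun p : ι × n => vecMulVec (c p.1) (Pi.single p.2 1)) fun X => ?_
  simp only [replacementChannel_apply, Finset.smul_sum, vecMulVec_mul, single_vecMul, one_smul,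
    conjTranspose_vecMulVec, Pi.star_single, star_one, vecMul_vecMulVec, dotProduct_single,
    row_apply, mul_one, vecMulVec_smul, Fintype.sum_prod_type, ← Finset.sum_smul]
  rfl

/-- The operator `(1 ⊗ ⟨y|) K (1 ⊗ |ν⟩)` on the first tensor factor. -/
def partialEntry {a b : Type*} [Fintype b] (K : Matrix (a × b) (a × b) ℂ) (y : b) (ν : b → ℂ) :
    Matrix a a ℂ :=
  Matrix.of fun i j => ∑ z, K (i, y) (j, z) * ν z

theorem mul_kronecker_vecMulVec_mul_conjTranspose_apply {a b : Type*} [Fintype a] [Fintype b]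
    (K : Matrix (a × b) (a × b) ℂ) (ρ : Matrix a a ℂ) (ν : b → ℂ) (i i' : a) (y y' : b) :
    (K * (ρ ⊗ₖ vecMulVec ν (star ν)) * Kᴴ) (i, y) (i', y') =
      (partialEntry K y ν * ρ * (partialEntry K y' ν)ᴴ) i i' := by
  simp only [mul_apply, kronecker_apply, vecMulVec_apply, partialEntry, of_apply,
    conjTranspose_apply, Fintype.sum_prod_type, star_sum, star_mul', Finset.sum_mul,
    Finset.mul_sum, Pi.star_apply]
  refine Finset.sum_congr rfl fun _ _ => Finset.sum_congr rfl fun _ _ =>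
    Finset.sum_congr rfl fun _ _ => Finset.sum_congr rfl fun _ _ => ?_
  ring

theorem ptraceB_kronecker {a b : Type*} [Fintype b] (A : Matrix a a ℂ) (σ : Matrix b b ℂ) :
    ptraceB (A ⊗ₖ σ) = σ.trace • A := by
  ext i i'
  simp [ptraceB, trace, Finset.mul_sum, mul_comm]

theorem ptraceB_sum_mul_kronecker_vecMulVec_mul_conjTranspose {ι a b : Type*} [Fintype ι]
    [Fintype a] [Fintype b] (K : ι → Matrix (a × b) (a × b) ℂ) (ρ : Matrix a a ℂ) (ν : b → ℂ) :
    ptraceB (∑ κ, K κ * (ρ ⊗ₖ vecMulVec ν (star ν)) * (K κ)ᴴ) =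
      ∑ p : ι × b, partialEntry (K p.1) p.2 ν * ρ * (partialEntry (K p.1) p.2 ν)ᴴ := by
  ext i i'
  simp [ptraceB, Matrix.sum_apply, mul_kronecker_vecMulVec_mul_conjTranspose_apply,
    Fintype.sum_prod_type, Finset.sum_comm (γ := b)]

theorem sum_mul_kronecker_vecMulVec_mul_conjTranspose_of_partialEntry_eq_smul
    {ι a b : Type*} [Fintype ι] [Fintype a] [Fintype b] (K : ι → Matrix (a × b) (a × b) ℂ)
    (ν : b → ℂ) (U : Matrix a a ℂ) (c : ι → b → ℂ)
    (hc : ∀ κ y, partialEntry (K κ) y ν = c κ y • U) (ρ : Matrix a a ℂ) :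
    ∑ κ, K κ * (ρ ⊗ₖ vecMulVec ν (star ν)) * (K κ)ᴴ =
      (U * ρ * Uᴴ) ⊗ₖ ∑ κ, vecMulVec (c κ) (star (c κ)) := by
  ext ⟨i, y⟩ ⟨i', y'⟩
  simp only [Matrix.sum_apply, mul_kronecker_vecMulVec_mul_conjTranspose_apply, hc,
    kronecker_apply, vecMulVec_apply, conjTranspose_smul, smul_mul, Matrix.mul_smul,
    Matrix.smul_apply, smul_eq_mul, Finset.mul_sum, Pi.star_apply]
  refine Finset.sum_congr rfl fun _ _ => ?_
  ring

/-- If the channel induced on system A by a fixed pure environment state is unitary,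
the joint output factorizes as a product. -/
theorem stmt_0 {mA mB : Type*} [Fintype mA] [DecidableEq mA] [Fintype mB] [DecidableEq mB]
    (N : Matrix (mA × mB) (mA × mB) ℂ →ₗ[ℂ] Matrix (mA × mB) (mA × mB) ℂ)
    (hN : IsCPTP N)
    (ν : mB → ℂ) (hν : star ν ⬝ᵥ ν = 1)
    (ξ : Matrix mB mB ℂ) (hξ : ξ = Matrix.vecMulVec ν (star ν))
    (U : Matrix mA mA ℂ) (hU : IsUnitary U)
    (hNA : ∀ ρ : Matrix mA mA ℂ, ptraceB (N (ρ ⊗ₖ ξ)) = U * ρ * Uᴴ) :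
    ∃ NB : Matrix mB mB ℂ →ₗ[ℂ] Matrix mB mB ℂ, IsCPTP NB ∧
      ∀ ρ : Matrix mA mA ℂ, IsState ρ →
        N (ρ ⊗ₖ ξ) = (ptraceB (N (ρ ⊗ₖ ξ))) ⊗ₖ (NB ξ) := by
  subst hξ
  obtain ⟨-, k, K, hK⟩ := hN
  have hξtr : (vecMulVec ν (star ν)).trace = 1 := by
    rw [trace_vecMulVec, dotProduct_comm, hν]
  rcases isEmpty_or_nonempty mA with hA | ⟨⟨i⟩⟩
  · refine ⟨replacementChannel (vecMulVec ν (star ν)), ?_, fun ρ hρ => ?_⟩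
    · simpa using isCPTP_replacementChannel (fun _ : Unit => ν) (by simpa using hξtr)
    · simpa [trace] using hρ.2
  have hslices : ∀ p : Fin k × mB, ∃ c : ℂ, partialEntry (K p.1) p.2 ν = c • U :=
    exists_eq_smul_of_sum_conj_eq_conj _ U fun ρ => by
      rw [← ptraceB_sum_mul_kronecker_vecMulVec_mul_conjTranspose, ← hK, hNA]
  choose c hc using hslices
  set σ := ∑ κ, vecMulVec (fun y => c (κ, y)) (star fun y => c (κ, y))
  have hfac : ∀ ρ, N (ρ ⊗ₖ vecMulVec ν (star ν)) = (U * ρ * Uᴴ) ⊗ₖ σ := fun ρ => by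
    rw [hK, sum_mul_kronecker_vecMulVec_mul_conjTranspose_of_partialEntry_eq_smul K ν U _
      (fun κ y => hc (κ, y))]
  have hσ : σ.trace = 1 := by
    have h1 := hNA 1
    rw [hfac, ptraceB_kronecker, mul_one, hU.1] at h1
    simpa using congrFun (congrFun h1 i) i
  refine ⟨replacementChannel σ, isCPTP_replacementChannel _ hσ, fun ρ _ => ?_⟩
  rw [hNA, replacementChannel_apply, hξtr, one_smul, hfac]
end
end

section
/- Let H_A and H_B be finite-dimensional and let N be a quantum channel on H_A ⊗ H_B. Suppose that for every pure state ξ on H_B the channel N_{A,ξ}(ρ) = Tr_B[N(ρ ⊗ ξ)] on H_A is unitary. Then N = N_A ⊗ N_B, where N_A is a fixed unitary channel on H_A and N_B is a quantum channel on H_B. -/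
open Matrix BigOperators
open scoped Kronecker ComplexOrder

noncomputable section

/-! Write `N = ∑ᵢ Kᵢ (·) Kᵢᴴ`. For a unit vector `ν`, the channel `ρ ↦ Tr_B N(ρ ⊗ |ν⟩⟨ν|)` has the
Kraus operators `A_{i,r}(ν) = (1 ⊗ ⟨r|) Kᵢ (1 ⊗ |ν⟩)`, which are linear in `ν`; as this channel is
unitary, they are all multiples of one unitary `U_ν`. Trace preservation of `N` gives
`∑ A_{i,r}(ν)ᴴ A_{i,r}(μ) = ⟨ν, μ⟩ 1`, which forces `U_μ ∈ ℂ U_ν` whenever `⟨ν, μ⟩ ≠ 0`.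
Any two vectors are joined by a chain of two non-orthogonal steps, so a single `U` serves all `ν`;
taking `ν = |s⟩` then shows `Kᵢ = U ⊗ Bᵢ`, i.e. `N = (U · Uᴴ) ⊗ ∑ᵢ Bᵢ · Bᵢᴴ`. -/

theorem forall_of_star_dotProduct_ne_zero {n : Type*} [Fintype n] {P : (n → ℂ) → Prop}
    {ν₀ : n → ℂ} (h₀ : P ν₀) (hν₀ : star ν₀ ⬝ᵥ ν₀ ≠ 0) (hzero : P 0)
    (hstep : ∀ ν μ, P ν → star ν ⬝ᵥ μ ≠ 0 → P μ) (μ : n → ℂ) : P μ := by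
  by_cases h : star ν₀ ⬝ᵥ μ = 0
  · rcases eq_or_ne μ 0 with rfl | hμ
    · exact hzero
    have hτ : P (ν₀ + μ) := hstep _ _ h₀ (by rwa [dotProduct_add, h, add_zero])
    exact hstep _ _ hτ (by rwa [star_add, add_dotProduct, h, zero_add, Ne,
      dotProduct_star_self_eq_zero])
  · exact hstep _ _ h₀ h

theorem exists_eq_smul_of_ne_zero {n : Type*} [Fintype n] {ν : n → ℂ} (hν : ν ≠ 0) :
    ∃ (t : ℂ) (ν' : n → ℂ), star ν' ⬝ᵥ ν' = 1 ∧ ν = t • ν' := by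
  set t : ℂ := ((‖WithLp.toLp 2 ν‖ : ℝ) : ℂ)
  have hνν : star ν ⬝ᵥ ν = t ^ 2 := by
    have := EuclideanSpace.inner_eq_star_dotProduct (WithLp.toLp 2 ν) (WithLp.toLp 2 ν)
    rw [inner_self_eq_norm_sq_to_K, dotProduct_comm] at this
    exact this.symm
  have ht : t ≠ 0 := by simpa [t] using hν
  refine ⟨t, t⁻¹ • ν, ?_, by rw [smul_smul, mul_inv_cancel₀ ht, one_smul]⟩
  rw [star_smul, smul_dotProduct, dotProduct_smul, hνν]
  simp [t, field]

section KrausOperators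

variable {n ι : Type*} [Fintype n] [Fintype ι]

def krausMap (K : ι → Matrix n n ℂ) : Matrix n n ℂ →ₗ[ℂ] Matrix n n ℂ :=
  ∑ i, LinearMap.mulLeft ℂ (K i) ∘ₗ LinearMap.mulRight ℂ (K i)ᴴ

theorem krausMap_apply (K : ι → Matrix n n ℂ) (X : Matrix n n ℂ) :
    krausMap K X = ∑ i, K i * X * (K i)ᴴ := by
  simp [krausMap, Matrix.mul_assoc]

theorem trace_krausMap_eq_iff [DecidableEq n] (K : ι → Matrix n n ℂ) :
    (∀ X, (krausMap K X).trace = X.trace) ↔ ∑ i, (K i)ᴴ * K i = 1 := by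
  have h (X : Matrix n n ℂ) : (krausMap K X).trace = ((∑ i, (K i)ᴴ * K i) * X).trace := by
    simp only [krausMap_apply, trace_sum, Finset.sum_mul, Matrix.mul_assoc]
    exact Finset.sum_congr rfl fun i _ => trace_mul_cycle' ..
  simp only [h, ext_iff_trace_mul_right (B := (1 : Matrix n n ℂ)), Matrix.one_mul]

variable [DecidableEq n]

theorem sum_mul_star_of_krausMap_eq_self {M : ι → Matrix n n ℂ}
    (h : ∀ ρ, krausMap M ρ = ρ) (a b c d : n) :
    ∑ j, M j c a * star (M j d b) = if c = a ∧ d = b then 1 else 0 := by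
  have := congr_fun (congr_fun (h (single a b 1)) c) d
  simpa [krausMap_apply, Matrix.sum_apply, mul_apply, single, ite_and, eq_comm] using this

theorem mem_span_one_of_krausMap_eq_self {M : ι → Matrix n n ℂ} (h : ∀ ρ, krausMap M ρ = ρ)
    (j : ι) : M j ∈ ℂ ∙ (1 : Matrix n n ℂ) := by
  have hM := sum_mul_star_of_krausMap_eq_self h
  have hoff : ∀ a c, c ≠ a → M j c a = 0 := by
    intro a c hca
    have h0 : (fun i => M i c a) ⬝ᵥ star (fun i => M i c a) = 0 := by
      simpa [dotProduct, hca] using hM a a c c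
    exact congr_fun (dotProduct_self_star_eq_zero.1 h0) j
  -- the vectors `i ↦ M i a a` have norm `1` and pairwise inner products `1`, so they coincide
  have hdiag : ∀ a b, M j a a = M j b b := by
    intro a b
    set w : n → ι → ℂ := fun a i => M i a a
    have hw : ∀ a b, star (w b) ⬝ᵥ w a = 1 := by
      intro a b
      rw [dotProduct_comm]
      simpa [dotProduct, w] using hM a b a b
    have : star (w a - w b) ⬝ᵥ (w a - w b) = 0 := by
      simp only [star_sub, sub_dotProduct, dotProduct_sub, hw, sub_self]
    exact congr_fun (sub_eq_zero.1 (dotProduct_star_self_eq_zero.1 this)) j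
  rcases isEmpty_or_nonempty n with hn | ⟨⟨a₀⟩⟩
  · exact Subsingleton.elim 0 (M j) ▸ zero_mem _
  refine Submodule.mem_span_singleton.2 ⟨M j a₀ a₀, ?_⟩
  ext a b
  by_cases hab : a = b
  · subst hab
    simp [hdiag a₀ a]
  · simp [one_apply, hab, hoff b a hab]

theorem mem_span_of_krausMap_eq_unitary {M : ι → Matrix n n ℂ} {U : Matrix n n ℂ}
    (hU : IsUnitary U) (h : ∀ ρ, krausMap M ρ = U * ρ * Uᴴ) (j : ι) : M j ∈ ℂ ∙ U := by
  have hUM : ∀ ρ, krausMap (fun i => Uᴴ * M i) ρ = ρ := by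
    intro ρ
    calc krausMap (fun i => Uᴴ * M i) ρ = Uᴴ * krausMap M ρ * U := by
          simp [krausMap_apply, Finset.mul_sum, Finset.sum_mul, conjTranspose_mul,
            Matrix.mul_assoc]
      _ = ρ := by
          rw [h]
          simp only [← Matrix.mul_assoc, hU.2, Matrix.one_mul]
          rw [Matrix.mul_assoc, hU.2, Matrix.mul_one]
  obtain ⟨c, hc⟩ := Submodule.mem_span_singleton.1 (mem_span_one_of_krausMap_eq_self hUM j)
  refine Submodule.mem_span_singleton.2 ⟨c, ?_⟩
  calc c • U = U * (c • 1) := by rw [Matrix.mul_smul, Matrix.mul_one]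
    _ = M j := by rw [hc, ← Matrix.mul_assoc, hU.1, Matrix.one_mul]

theorem mem_span_of_sum_conjTranspose_mul_eq_smul_one [Nonempty n] {U V : Matrix n n ℂ}
    (hU : U * Uᴴ = 1) {A B : ι → Matrix n n ℂ} (hA : ∀ j, A j ∈ ℂ ∙ U) (hB : ∀ j, B j ∈ ℂ ∙ V)
    {z : ℂ} (hz : z ≠ 0)
    (h : ∑ j, (A j)ᴴ * B j = z • 1) (j : ι) : B j ∈ ℂ ∙ U := by
  choose c hc using fun j => Submodule.mem_span_singleton.1 (hA j)
  choose d hd using fun j => Submodule.mem_span_singleton.1 (hB j)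
  set s := ∑ j, star (c j) * d j
  have hs : s • (Uᴴ * V) = z • 1 := by
    rw [← h, Finset.sum_smul]
    refine Finset.sum_congr rfl fun j _ => ?_
    rw [← hc, ← hd, conjTranspose_smul, Matrix.smul_mul, Matrix.mul_smul, smul_smul]
  have hs0 : s ≠ 0 := by
    rintro hs0
    rw [hs0, zero_smul, eq_comm, smul_eq_zero] at hs
    exact hs.elim hz one_ne_zero
  have hV : V ∈ ℂ ∙ U := by
    refine Submodule.mem_span_singleton.2 ⟨s⁻¹ * z, ?_⟩
    calc (s⁻¹ * z) • U = U * (s⁻¹ • s • (Uᴴ * V)) := by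
          rw [hs, smul_smul, Matrix.mul_smul, Matrix.mul_one]
      _ = V := by rw [smul_smul, inv_mul_cancel₀ hs0, one_smul, ← Matrix.mul_assoc, hU,
          Matrix.one_mul]
  exact (Submodule.span_singleton_le_iff_mem V _).2 hV (hB j)

end KrausOperators

theorem krausMap_kronecker {a b ι : Type*} [Fintype a] [Fintype b] [Fintype ι]
    (U : Matrix a a ℂ) (B : ι → Matrix b b ℂ) (X : Matrix a a ℂ) (Y : Matrix b b ℂ) :
    krausMap (fun i => U ⊗ₖ B i) (X ⊗ₖ Y) = (U * X * Uᴴ) ⊗ₖ krausMap B Y := by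
  ext p q
  simp [krausMap_apply, conjTranspose_kronecker, ← mul_kronecker_mul, Matrix.sum_apply,
    Finset.mul_sum]

section Bipartite

variable {a b : Type*} [DecidableEq a]

variable (a) in
/-- The isometry `1 ⊗ |ν⟩` from `ℂ^a` into `ℂ^a ⊗ ℂ^b`. -/
def idKronKet (ν : b → ℂ) : Matrix (a × b) a ℂ :=
  of fun p x => if p.1 = x then ν p.2 else 0

theorem idKronKet_smul (c : ℂ) (ν : b → ℂ) : idKronKet a (c • ν) = c • idKronKet a ν := by
  ext
  simp [idKronKet]

theorem idKronKet_zero : idKronKet a (0 : b → ℂ) = 0 := by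
  simpa using idKronKet_smul (a := a) 0 (0 : b → ℂ)

theorem kronecker_vecMulVec_eq [Fintype a] (ρ : Matrix a a ℂ) (ν μ : b → ℂ) :
    ρ ⊗ₖ vecMulVec ν (star μ) = idKronKet a ν * ρ * (idKronKet a μ)ᴴ := by
  ext ⟨x, s⟩ ⟨y, t⟩
  simp [mul_apply, idKronKet, vecMulVec_apply, apply_ite (starRingEnd ℂ)]
  ring

variable [Fintype a] [Fintype b]

theorem conjTranspose_idKronKet_mul_idKronKet (ν μ : b → ℂ) :
    (idKronKet a ν)ᴴ * idKronKet a μ = (star ν ⬝ᵥ μ) • (1 : Matrix a a ℂ) := by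
  ext x y
  simp [mul_apply, idKronKet, Fintype.sum_prod_type, one_apply, dotProduct,
    apply_ite (starRingEnd ℂ), ite_mul, eq_comm]

variable [DecidableEq b]

theorem ptraceB_eq_sum (M : Matrix (a × b) (a × b) ℂ) :
    ptraceB M = ∑ r : b, (idKronKet a (Pi.single r 1))ᴴ * M * idKronKet a (Pi.single r 1) := by
  ext x y
  simp [ptraceB, Matrix.sum_apply, mul_apply, idKronKet, Fintype.sum_prod_type, Pi.single_apply,
    apply_ite (starRingEnd ℂ), ite_mul]

theorem sum_idKronKet_single_mul_conjTranspose :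
    ∑ r : b, idKronKet a (Pi.single r 1) * (idKronKet a (Pi.single r 1))ᴴ = 1 := by
  ext ⟨x, s⟩ ⟨y, t⟩
  simp [Matrix.sum_apply, mul_apply, idKronKet, Pi.single_apply, one_apply,
    apply_ite (starRingEnd ℂ), eq_comm, ite_and]

theorem conjTranspose_idKronKet_single_mul_mul_apply (M : Matrix (a × b) (a × b) ℂ) (r s : b)
    (x y : a) :
    ((idKronKet a (Pi.single r 1))ᴴ * M * idKronKet a (Pi.single s 1)) x y = M (x, r) (y, s) := by
  simp [mul_apply, idKronKet, Fintype.sum_prod_type, Pi.single_apply, apply_ite (starRingEnd ℂ),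
    ite_mul]

variable {ι : Type*}

/-- The Kraus operators `(1 ⊗ ⟨r|) Kᵢ (1 ⊗ |ν⟩)`, indexed by `(i, r)`, of the channel
`ρ ↦ Tr_B (Φ (ρ ⊗ |ν⟩⟨ν|))` induced by `Φ = krausMap K`. -/
def inducedKraus (K : ι → Matrix (a × b) (a × b) ℂ) (ν : b → ℂ) (j : ι × b) : Matrix a a ℂ :=
  (idKronKet a (Pi.single j.2 1))ᴴ * K j.1 * idKronKet a ν

theorem inducedKraus_smul (K : ι → Matrix (a × b) (a × b) ℂ) (c : ℂ) (ν : b → ℂ) (j : ι × b) :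
    inducedKraus K (c • ν) j = c • inducedKraus K ν j := by
  rw [inducedKraus, inducedKraus, idKronKet_smul, Matrix.mul_smul]

theorem inducedKraus_zero (K : ι → Matrix (a × b) (a × b) ℂ) (j : ι × b) :
    inducedKraus K 0 j = 0 := by
  rw [inducedKraus, idKronKet_zero, Matrix.mul_zero]

variable [Fintype ι]

theorem ptraceB_krausMap_kronecker_vecMulVec (K : ι → Matrix (a × b) (a × b) ℂ)
    (ρ : Matrix a a ℂ) (ν : b → ℂ) :
    ptraceB (krausMap K (ρ ⊗ₖ vecMulVec ν (star ν))) = krausMap (inducedKraus K ν) ρ := by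
  simp only [krausMap_apply, kronecker_vecMulVec_eq, ptraceB_eq_sum, inducedKraus,
    Fintype.sum_prod_type, Matrix.mul_sum, Matrix.sum_mul, conjTranspose_mul,
    conjTranspose_conjTranspose, Matrix.mul_assoc]
  exact Finset.sum_comm

theorem sum_conjTranspose_inducedKraus_mul {K : ι → Matrix (a × b) (a × b) ℂ}
    (hK : ∑ i, (K i)ᴴ * K i = 1) (ν μ : b → ℂ) :
    ∑ j, (inducedKraus K ν j)ᴴ * inducedKraus K μ j = (star ν ⬝ᵥ μ) • (1 : Matrix a a ℂ) := by
  calc ∑ j, (inducedKraus K ν j)ᴴ * inducedKraus K μ j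
      = (idKronKet a ν)ᴴ * (∑ i, (K i)ᴴ *
          (∑ r : b, idKronKet a (Pi.single r 1) * (idKronKet a (Pi.single r 1))ᴴ) * K i) *
          idKronKet a μ := by
        simp only [inducedKraus, Fintype.sum_prod_type, Matrix.mul_sum, Matrix.sum_mul,
          conjTranspose_mul, conjTranspose_conjTranspose, Matrix.mul_assoc]
    _ = (star ν ⬝ᵥ μ) • 1 := by
        rw [sum_idKronKet_single_mul_conjTranspose]
        simp only [Matrix.mul_one, hK, conjTranspose_idKronKet_mul_idKronKet]

theorem exists_eq_kronecker_of_induced_unitary [Nonempty a] {K : ι → Matrix (a × b) (a × b) ℂ}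
    (hK : ∑ i, (K i)ᴴ * K i = 1)
    (h : ∀ ν : b → ℂ, star ν ⬝ᵥ ν = 1 → ∃ U : Matrix a a ℂ, IsUnitary U ∧
      ∀ ρ, krausMap (inducedKraus K ν) ρ = U * ρ * Uᴴ) :
    ∃ U : Matrix a a ℂ, IsUnitary U ∧ ∃ B : ι → Matrix b b ℂ, ∀ i, K i = U ⊗ₖ B i := by
  rcases isEmpty_or_nonempty b with hb | ⟨⟨b₀⟩⟩
  · exact ⟨1, ⟨by simp, by simp⟩, 0, fun _ => Subsingleton.elim _ _⟩
  have hspan : ∀ ν ≠ 0, ∃ V : Matrix a a ℂ, ∀ j, inducedKraus K ν j ∈ ℂ ∙ V := by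
    intro ν hν
    obtain ⟨t, ν', hν', rfl⟩ := exists_eq_smul_of_ne_zero hν
    obtain ⟨V, hV, hVρ⟩ := h ν' hν'
    refine ⟨V, fun j => ?_⟩
    rw [inducedKraus_smul]
    exact Submodule.smul_mem _ t (mem_span_of_krausMap_eq_unitary hV hVρ j)
  have he₀ : star (Pi.single b₀ 1 : b → ℂ) ⬝ᵥ Pi.single b₀ 1 = 1 := by simp
  obtain ⟨U, hU, hUρ⟩ := h _ he₀
  have hmem : ∀ ν j, inducedKraus K ν j ∈ ℂ ∙ U := by
    refine forall_of_star_dotProduct_ne_zero (P := fun ν => ∀ j, inducedKraus K ν j ∈ ℂ ∙ U)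
      (mem_span_of_krausMap_eq_unitary hU hUρ) (by rw [he₀]; exact one_ne_zero)
      (fun j => by rw [inducedKraus_zero]; exact zero_mem _) ?_
    intro ν μ hν hνμ
    obtain ⟨V, hV⟩ := hspan μ (by rintro rfl; simp at hνμ)
    exact mem_span_of_sum_conjTranspose_mul_eq_smul_one hU.1 hν hV hνμ
      (sum_conjTranspose_inducedKraus_mul hK ν μ)
  choose c hc using fun i r s => Submodule.mem_span_singleton.1 (hmem (Pi.single s 1) (i, r))
  refine ⟨U, hU, fun i => of (c i), fun i => ?_⟩
  ext ⟨x, r⟩ ⟨y, s⟩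
  calc K i (x, r) (y, s) = inducedKraus K (Pi.single s 1) (i, r) x y :=
        (conjTranspose_idKronKet_single_mul_mul_apply (K i) r s x y).symm
    _ = (U ⊗ₖ of (c i)) (x, r) (y, s) := by
        rw [← hc]
        simp [mul_comm]

end Bipartite

/-- If every pure environment state induces a unitary channel on A, then the channel
is a product of a fixed unitary channel on A and a channel on B. -/
theorem stmt_2 {mA mB : Type*} [Fintype mA] [DecidableEq mA] [Fintype mB] [DecidableEq mB]
    (N : Matrix (mA × mB) (mA × mB) ℂ →ₗ[ℂ] Matrix (mA × mB) (mA × mB) ℂ)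
    (hN : IsCPTP N)
    (hall : ∀ ν : mB → ℂ, star ν ⬝ᵥ ν = 1 →
      ∃ U : Matrix mA mA ℂ, IsUnitary U ∧
        ∀ ρ : Matrix mA mA ℂ,
          ptraceB (N (ρ ⊗ₖ Matrix.vecMulVec ν (star ν))) = U * ρ * Uᴴ) :
    ∃ (U : Matrix mA mA ℂ) (NB : Matrix mB mB ℂ →ₗ[ℂ] Matrix mB mB ℂ),
      IsUnitary U ∧ IsCPTP NB ∧
      ∀ (X : Matrix mA mA ℂ) (Y : Matrix mB mB ℂ),
        N (X ⊗ₖ Y) = (U * X * Uᴴ) ⊗ₖ (NB Y) := by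
  obtain ⟨hTP, k, K, hK⟩ := hN
  obtain rfl : N = krausMap K := LinearMap.ext fun X => (hK X).trans (krausMap_apply K X).symm
  rcases isEmpty_or_nonempty mA with hA | hA
  · exact ⟨1, LinearMap.id, ⟨by simp, by simp⟩, ⟨fun _ => rfl, 1, fun _ => 1, by simp⟩,
      fun _ _ => Subsingleton.elim _ _⟩
  obtain ⟨U, hU, B, hKB⟩ := exists_eq_kronecker_of_induced_unitary
    ((trace_krausMap_eq_iff K).1 hTP)
    fun ν hν => by simpa only [ptraceB_krausMap_kronecker_vecMulVec] using hall ν hν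
  obtain rfl : K = fun i => U ⊗ₖ B i := funext hKB
  have hTPB (Y : Matrix mB mB ℂ) : (krausMap B Y).trace = Y.trace := by
    obtain ⟨a₀⟩ := hA
    have := hTP (single a₀ a₀ 1 ⊗ₖ Y)
    rwa [krausMap_kronecker, trace_kronecker, trace_kronecker, trace_mul_cycle, hU.2,
      Matrix.one_mul, trace_single_eq_same, one_mul, one_mul] at this
  exact ⟨U, krausMap B, hU, ⟨hTPB, k, B, krausMap_apply B⟩, krausMap_kronecker U B⟩
end
end

section
/- No-cloning theorem (finite dimension ≥ 2): Let H_A be a finite-dimensional Hilbert space with dim H_A ≥ 2 and let ξ be a fixed state on H_B ≅ H_A. There is no quantum channel N on H_A ⊗ H_B such that N(ρ ⊗ ξ) = ρ ⊗ ρ for all states ρ on H_A. -/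
/-!
The map `ρ ↦ N (ρ ⊗ ξ)` is linear while `ρ ↦ ρ ⊗ ρ` is quadratic. Comparing them on two
states `ρ`, `σ` and on their midpoint gives `(ρ - σ) ⊗ (ρ - σ) = 0`, hence `ρ = σ`; but in
dimension at least two there are distinct states.
-/

open Matrix BigOperators
open scoped Kronecker ComplexOrder

noncomputable section

theorem Matrix.eq_of_linearMap_apply_eq_kronecker_self {R m n : Type*} [Field R] [CharZero R]
    (f : Matrix m n R →ₗ[R] Matrix (m × m) (n × n) R) {A B : Matrix m n R}
    (hA : f A = A ⊗ₖ A) (hB : f B = B ⊗ₖ B)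
    (hAB : f ((2 : R)⁻¹ • (A + B)) = ((2 : R)⁻¹ • (A + B)) ⊗ₖ ((2 : R)⁻¹ • (A + B))) :
    A = B := by
  rw [map_smul, map_add, hA, hB] at hAB
  ext i j
  have hij := congr_fun (congr_fun hAB (i, i)) (j, j)
  simp only [smul_apply, add_apply, kronecker_apply, smul_eq_mul] at hij
  -- the `((i, i), (j, j))` entry of `hAB` reads `(A i j - B i j) ^ 2 / 4 = 0`
  have hsq : (A i j - B i j) ^ 2 = 0 := by linear_combination 4 * hij
  exact sub_eq_zero.mp (pow_eq_zero_iff two_ne_zero |>.mp hsq)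

theorem IsState.half_smul_add {m : Type*} [Fintype m] {ρ σ : Matrix m m ℂ}
    (hρ : IsState ρ) (hσ : IsState σ) : IsState ((2 : ℂ)⁻¹ • (ρ + σ)) := by
  refine ⟨(hρ.1.add hσ.1).smul (by positivity), ?_⟩
  rw [trace_smul, trace_add, hρ.2, hσ.2]
  norm_num

theorem isState_diagonal_single {m : Type*} [Fintype m] [DecidableEq m] (k : m) :
    IsState (diagonal (Pi.single k 1) : Matrix m m ℂ) := by
  refine ⟨posSemidef_diagonal_iff.mpr fun a => ?_, by simp [trace_diagonal]⟩
  by_cases h : a = k <;> simp [h]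

theorem diagonal_single_ne {R m : Type*} [Zero R] [One R] [NeZero (1 : R)] [DecidableEq m]
    {i j : m} (hij : i ≠ j) :
    (diagonal (Pi.single i 1) : Matrix m m R) ≠ diagonal (Pi.single j 1) := by
  intro h
  simpa [hij] using congr_fun (congr_fun h i) i

theorem stmt_3_general {mA : Type*} [Fintype mA]
    (hdim : 2 ≤ Fintype.card mA)
    (ξ : Matrix mA mA ℂ) :
    ¬ ∃ N : Matrix (mA × mA) (mA × mA) ℂ →ₗ[ℂ] Matrix (mA × mA) (mA × mA) ℂ,
        IsCPTP N ∧ ∀ ρ : Matrix mA mA ℂ, IsState ρ → N (ρ ⊗ₖ ξ) = ρ ⊗ₖ ρ := by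
  rintro ⟨N, -, hN⟩
  classical
  obtain ⟨i, j, hij⟩ := Fintype.exists_pair_of_one_lt_card hdim
  let cloneMap : Matrix mA mA ℂ →ₗ[ℂ] Matrix (mA × mA) (mA × mA) ℂ :=
    N ∘ₗ (kroneckerBilinear (R := ℂ)).flip ξ
  have hclone (ρ : Matrix mA mA ℂ) (hρ : IsState ρ) : cloneMap ρ = ρ ⊗ₖ ρ := by
    simpa [cloneMap, kroneckerBilinear] using hN ρ hρ
  have hi := isState_diagonal_single i
  have hj := isState_diagonal_single j
  exact diagonal_single_ne hij <| eq_of_linearMap_apply_eq_kronecker_self cloneMap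
    (hclone _ hi) (hclone _ hj) (hclone _ (hi.half_smul_add hj))

/-- No-cloning theorem. -/
theorem stmt_3 {mA : Type*} [Fintype mA] [DecidableEq mA]
    (hdim : 2 ≤ Fintype.card mA)
    (ξ : Matrix mA mA ℂ) (hξ : IsState ξ) :
    ¬ ∃ N : Matrix (mA × mA) (mA × mA) ℂ →ₗ[ℂ] Matrix (mA × mA) (mA × mA) ℂ,
        IsCPTP N ∧ ∀ ρ : Matrix mA mA ℂ, IsState ρ → N (ρ ⊗ₖ ξ) = ρ ⊗ₖ ρ :=
  stmt_3_general hdim ξ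
end
end

section
/- No-broadcasting theorem (finite dimension ≥ 2): Let H_A ≅ H_B be finite-dimensional with dimension ≥ 2 and let ξ be a fixed state on H_B. There is no quantum channel N on H_A ⊗ H_B such that for every state ρ on H_A, the output ρ̃ = N(ρ ⊗ ξ) satisfies Tr_A[ρ̃] = ρ and Tr_B[ρ̃] = ρ. -/
/-!
A positive semidefinite `M` on `A ⊗ B` whose `B`-marginal is a pure state `|ψ⟩⟨ψ|` is forced to be
`|ψ⟩⟨ψ| ⊗ Tr_A M`: the trace of `M` against `(1 - |ψ⟩⟨ψ|) ⊗ 1` vanishes, so `M` is annihilated by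
that projection on both sides. Hence a broadcasting channel sends `ρ ⊗ ξ` to `ρ ⊗ ρ` for every pure
`ρ`. Linearity then fails: two orthonormal bases of the same plane have the same sum of
projections, but different sums of `ρ ⊗ ρ`.
-/

open Matrix BigOperators
open scoped Kronecker ComplexOrder

noncomputable section

section PartialTrace

variable {a b : Type*} [Fintype a] [Fintype b]

omit [Fintype b] in
theorem ptraceA_kronecker (A : Matrix a a ℂ) (B : Matrix b b ℂ) :
    ptraceA (A ⊗ₖ B) = A.trace • B := by
  ext i j
  simp [ptraceA, Matrix.trace, Finset.sum_mul]

theorem trace_mul_kronecker_one [DecidableEq b] (M : Matrix (a × b) (a × b) ℂ)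
    (A : Matrix a a ℂ) : (M * (A ⊗ₖ (1 : Matrix b b ℂ))).trace = (ptraceB M * A).trace := by
  simp only [Matrix.trace, diag_apply, mul_apply, ptraceB, Fintype.sum_prod_type,
    kroneckerMap_apply, one_apply, mul_ite, mul_one, mul_zero, Finset.sum_ite_eq',
    Finset.mem_univ, if_true, of_apply, Finset.sum_mul]
  rw [Finset.sum_congr rfl fun i _ => Finset.sum_comm]

end PartialTrace

theorem Matrix.vecMulVec_kronecker_one_mul_mul {R a b : Type*} [CommSemiring R] [Fintype a] [Fintype b]
    [DecidableEq b] (u v w x : a → R) (M : Matrix (a × b) (a × b) R) :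
    (vecMulVec u v ⊗ₖ (1 : Matrix b b R)) * M * (vecMulVec w x ⊗ₖ 1)
      = vecMulVec u x ⊗ₖ of fun k l => ∑ p, ∑ q, v p * M (p, k) (q, l) * w q := by
  ext ⟨i, k⟩ ⟨j, l⟩
  simp only [mul_apply, kroneckerMap_apply, vecMulVec_apply, one_apply, mul_ite, mul_one, mul_zero,
    ite_mul, zero_mul, Fintype.sum_prod_type, Finset.sum_ite_eq, Finset.sum_ite_eq',
    Finset.mem_univ, if_true, Finset.sum_mul, Finset.mul_sum, of_apply]
  rw [Finset.sum_comm]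
  exact Fintype.sum_congr _ _ fun p => Fintype.sum_congr _ _ fun q => by ring

theorem Matrix.PosSemidef.mul_eq_zero_of_trace_mul_mul_conjTranspose {𝕜 n m : Type*} [RCLike 𝕜]
    [Fintype n] [Fintype m] {M : Matrix n n 𝕜} (hM : M.PosSemidef) {R : Matrix n m 𝕜}
    (h : (M * (R * Rᴴ)).trace = 0) : M * R = 0 := by
  classical
  open scoped MatrixOrder in
  obtain ⟨B, rfl⟩ := CStarAlgebra.nonneg_iff_eq_star_mul_self.mp hM.nonneg
  have hBR : B * R = 0 := by
    rw [← trace_conjTranspose_mul_self_eq_zero_iff, ← h, conjTranspose_mul, Matrix.mul_assoc,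
      trace_mul_comm, star_eq_conjTranspose]
    simp only [Matrix.mul_assoc]
  rw [Matrix.mul_assoc, hBR, Matrix.mul_zero]

theorem Matrix.PosSemidef.eq_kronecker_ptraceA_of_ptraceB_eq_vecMulVec {a b : Type*} [Fintype a]
    [Fintype b] {M : Matrix (a × b) (a × b) ℂ} (hM : M.PosSemidef) {ψ : a → ℂ}
    (hψ : star ψ ⬝ᵥ ψ = 1) (hB : ptraceB M = vecMulVec ψ (star ψ)) :
    M = vecMulVec ψ (star ψ) ⊗ₖ ptraceA M := by
  classical
  set P := vecMulVec ψ (star ψ)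
  have hPP : P * P = P := by
    rw [vecMulVec_mul_vecMulVec, hψ, one_smul]
  have hPH : Pᴴ = P := by
    rw [conjTranspose_vecMulVec, star_star]
  have hMQ : M * (P ⊗ₖ 1) = M := by
    have hR : M * ((1 - P) ⊗ₖ (1 : Matrix b b ℂ)) = 0 := by
      refine hM.mul_eq_zero_of_trace_mul_mul_conjTranspose ?_
      have hRR : (1 - P) * (1 - P)ᴴ = 1 - P := by
        rw [conjTranspose_sub, hPH, conjTranspose_one, Matrix.mul_sub, Matrix.sub_mul,
          Matrix.sub_mul, hPP, Matrix.mul_one, Matrix.one_mul, sub_self, sub_zero, Matrix.mul_one]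
      rw [conjTranspose_kronecker, ← mul_kronecker_mul, hRR, conjTranspose_one, Matrix.mul_one,
        trace_mul_kronecker_one, hB, Matrix.mul_sub, hPP, Matrix.mul_one, sub_self, trace_zero]
    conv_rhs => rw [← Matrix.mul_one M, ← one_kronecker_one, ← add_sub_cancel P 1,
      add_kronecker, Matrix.mul_add, hR, add_zero]
  have hQM : (P ⊗ₖ 1) * M = M := by
    simpa [conjTranspose_kronecker, hPH, hM.1.eq] using congrArg (·ᴴ) hMQ
  obtain ⟨C, hMC⟩ : ∃ C, M = P ⊗ₖ C :=
    ⟨_, by rw [← vecMulVec_kronecker_one_mul_mul, hQM, hMQ]⟩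
  conv_rhs => rw [hMC, ptraceA_kronecker, trace_vecMulVec, dotProduct_comm, hψ, one_smul]
  exact hMC

theorem IsCPTP.posSemidef_apply {m : Type*} [Fintype m] {Φ : Matrix m m ℂ →ₗ[ℂ] Matrix m m ℂ}
    (hΦ : IsCPTP Φ) {X : Matrix m m ℂ} (hX : X.PosSemidef) : (Φ X).PosSemidef := by
  obtain ⟨-, k, K, hK⟩ := hΦ
  rw [hK]
  exact posSemidef_sum _ fun i _ => hX.mul_mul_conjTranspose_same (K i)

theorem isState_vecMulVec {m : Type*} [Fintype m] {ψ : m → ℂ} (hψ : star ψ ⬝ᵥ ψ = 1) :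
    IsState (vecMulVec ψ (star ψ)) :=
  ⟨posSemidef_vecMulVec_self_star ψ, by rw [trace_vecMulVec, dotProduct_comm, hψ]⟩

theorem IsCPTP.apply_vecMulVec_kronecker_of_broadcasts {m : Type*} [Fintype m]
    {N : Matrix (m × m) (m × m) ℂ →ₗ[ℂ] Matrix (m × m) (m × m) ℂ} (hN : IsCPTP N)
    {ξ : Matrix m m ℂ} (hξ : ξ.PosSemidef)
    (hbroad : ∀ ρ : Matrix m m ℂ, IsState ρ →
      ptraceA (N (ρ ⊗ₖ ξ)) = ρ ∧ ptraceB (N (ρ ⊗ₖ ξ)) = ρ)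
    {ψ : m → ℂ} (hψ : star ψ ⬝ᵥ ψ = 1) :
    N (vecMulVec ψ (star ψ) ⊗ₖ ξ) = vecMulVec ψ (star ψ) ⊗ₖ vecMulVec ψ (star ψ) := by
  obtain ⟨hA, hB⟩ := hbroad _ (isState_vecMulVec hψ)
  have hpos := hN.posSemidef_apply ((posSemidef_vecMulVec_self_star ψ).kronecker hξ)
  rw [hpos.eq_kronecker_ptraceA_of_ptraceB_eq_vecMulVec hψ hB, hA]

theorem not_map_add_of_map_vecMulVec_eq_kronecker_self {m : Type*} [Fintype m]
    (hm : 1 < Fintype.card m) (F : Matrix m m ℂ → Matrix (m × m) (m × m) ℂ)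
    (hF : ∀ ψ : m → ℂ, star ψ ⬝ᵥ ψ = 1 →
      F (vecMulVec ψ (star ψ)) = vecMulVec ψ (star ψ) ⊗ₖ vecMulVec ψ (star ψ)) :
    ¬ ∀ A B, F (A + B) = F A + F B := by
  classical
  intro hadd
  obtain ⟨i, j, hij⟩ := Fintype.exists_pair_of_one_lt_card hm
  -- `{e_i, e_j}` and `{(3e_i + 4e_j)/5, (4e_i - 3e_j)/5}` span the same plane, but the
  -- `((i, i), (j, j))` entries of their sums of `ρ ⊗ ρ` are `0` and `2 (12/25)²`.
  let v : ℂ → ℂ → m → ℂ := fun c d => Pi.single i c + Pi.single j d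
  have hnorm : ∀ c d : ℂ, star (v c d) ⬝ᵥ v c d = star c * c + star d * d := by
    intro c d
    simp [v, dotProduct_add, hij, hij.symm]
  have h1 : star (v 1 0) ⬝ᵥ v 1 0 = 1 := by simp [hnorm]
  have h2 : star (v 0 1) ⬝ᵥ v 0 1 = 1 := by simp [hnorm]
  have h3 : star (v (3/5) (4/5)) ⬝ᵥ v (3/5) (4/5) = 1 := by
    rw [hnorm]; norm_num [Complex.ext_iff]
  have h4 : star (v (4/5) (-3/5)) ⬝ᵥ v (4/5) (-3/5) = 1 := by
    rw [hnorm]; norm_num [Complex.ext_iff]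
  have hsum : vecMulVec (v 1 0) (star (v 1 0)) + vecMulVec (v 0 1) (star (v 0 1))
      = vecMulVec (v (3/5) (4/5)) (star (v (3/5) (4/5)))
        + vecMulVec (v (4/5) (-3/5)) (star (v (4/5) (-3/5))) := by
    ext p q
    simp only [v, Matrix.add_apply, vecMulVec_apply, Pi.add_apply, Pi.star_apply, Pi.single_apply]
    split_ifs <;> norm_num [Complex.ext_iff]
  have key := congrFun (congrFun (congrArg F hsum) (i, i)) (j, j)
  rw [hadd, hadd, hF _ h1, hF _ h2, hF _ h3, hF _ h4] at key
  norm_num [v, vecMulVec_apply, hij, hij.symm, Complex.ext_iff] at key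

theorem stmt_4_general {mA : Type*} [Fintype mA]
    (hdim : 2 ≤ Fintype.card mA)
    (ξ : Matrix mA mA ℂ) (hξ : IsState ξ) :
    ¬ ∃ N : Matrix (mA × mA) (mA × mA) ℂ →ₗ[ℂ] Matrix (mA × mA) (mA × mA) ℂ,
        IsCPTP N ∧ ∀ ρ : Matrix mA mA ℂ, IsState ρ →
          ptraceA (N (ρ ⊗ₖ ξ)) = ρ ∧ ptraceB (N (ρ ⊗ₖ ξ)) = ρ := by
  rintro ⟨N, hN, hbroad⟩
  refine not_map_add_of_map_vecMulVec_eq_kronecker_self hdim (fun ρ => N (ρ ⊗ₖ ξ))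
    (fun ψ hψ => hN.apply_vecMulVec_kronecker_of_broadcasts hξ.1 hbroad hψ) ?_
  exact fun A B => by rw [add_kronecker, map_add]

/-- No-broadcasting theorem. -/
theorem stmt_4 {mA : Type*} [Fintype mA] [DecidableEq mA]
    (hdim : 2 ≤ Fintype.card mA)
    (ξ : Matrix mA mA ℂ) (hξ : IsState ξ) :
    ¬ ∃ N : Matrix (mA × mA) (mA × mA) ℂ →ₗ[ℂ] Matrix (mA × mA) (mA × mA) ℂ,
        IsCPTP N ∧ ∀ ρ : Matrix mA mA ℂ, IsState ρ →
          ptraceA (N (ρ ⊗ₖ ξ)) = ρ ∧ ptraceB (N (ρ ⊗ₖ ξ)) = ρ :=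
  stmt_4_general hdim ξ hξ
end
end

section
/- Let H_A and H_B be finite-dimensional Hilbert spaces. If a channel N on H_A ⊗ H_B satisfies Tr_B[N(ρ ⊗ ξ)] = ρ for all states ρ on H_A and a fixed pure state ξ on H_B, then there exists a state σ on H_B, independent of ρ, such that N(ρ ⊗ ξ) = ρ ⊗ σ for all states ρ. -/
/-
Write the channel in Kraus form `N X = ∑ᵢ Kᵢ X Kᵢᴴ`. On inputs `ρ ⊗ |ν⟩⟨ν|` the output block at
`(b, b')` is `∑ᵢ M_{i,b} ρ M_{i,b'}ᴴ`, where `M_{i,b} = (1 ⊗ ⟨b|) Kᵢ (1 ⊗ |ν⟩)`, so the hypothesis says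
that the operators `M_{i,b}` are Kraus operators of the identity channel on `H_A`. Testing the
identity `∑ M |u⟩⟨u| Mᴴ = |u⟩⟨u|` against `w ⊥ u` shows `⟨w, M u⟩ = 0`, so every vector is an
eigenvector of every `M_{i,b}`, which is therefore a scalar `c_{i,b}`. Then `N (ρ ⊗ ξ) = ρ ⊗ σ` with
`σ = ∑ᵢ |cᵢ⟩⟨cᵢ|`, and taking the partial trace of this identity forces `Tr σ = 1`.
-/

open Matrix BigOperators
open scoped Kronecker ComplexOrder

noncomputable section

lemma exists_eq_smul_of_forall_orthogonal {n : Type*} [Fintype n] {u v : n → ℂ}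
    (h : ∀ w, star w ⬝ᵥ u = 0 → star w ⬝ᵥ v = 0) : ∃ c : ℂ, v = c • u := by
  rcases eq_or_ne u 0 with rfl | hu
  · exact ⟨0, by simpa using h v (dotProduct_zero _)⟩
  have hu' : star u ⬝ᵥ u ≠ 0 := dotProduct_star_self_eq_zero.not.mpr hu
  set r := v - ((star u ⬝ᵥ v) / (star u ⬝ᵥ u)) • u with hr
  have hur : star u ⬝ᵥ r = 0 := by
    rw [hr, dotProduct_sub, dotProduct_smul, smul_eq_mul, div_mul_cancel₀ _ hu', sub_self]
  have hru : star r ⬝ᵥ u = 0 := by rw [star_dotProduct, hur, star_zero]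
  have hrr : star r ⬝ᵥ r = 0 := by
    rw [hr, dotProduct_sub, dotProduct_smul, ← hr, h r hru, hru, smul_zero, sub_zero]
  exact ⟨_, sub_eq_zero.mp (dotProduct_star_self_eq_zero.mp hrr)⟩

lemma star_dotProduct_vecMulVec_self_mulVec {n : Type*} [Fintype n] (v w : n → ℂ) :
    star w ⬝ᵥ (vecMulVec v (star v) *ᵥ w) = star (star w ⬝ᵥ v) * (star w ⬝ᵥ v) := by
  rw [vecMulVec_mulVec, dotProduct_smul, star_dotProduct v w]
  simp [mul_comm]

lemma mul_vecMulVec_mul_conjTranspose {n : Type*} [Fintype n] (A : Matrix n n ℂ) (u : n → ℂ) :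
    A * vecMulVec u (star u) * Aᴴ = vecMulVec (A *ᵥ u) (star (A *ᵥ u)) := by
  rw [mul_vecMulVec, vecMulVec_mul, star_mulVec]

lemma exists_eq_smul_one_of_forall_mulVec {n : Type*} [Fintype n] [DecidableEq n]
    (M : Matrix n n ℂ) (h : ∀ u, ∃ c : ℂ, M *ᵥ u = c • u) : ∃ c : ℂ, M = c • 1 := by
  obtain ⟨c, hc⟩ := LinearMap.exists_eq_smul_id_of_forall_notLinearIndependent
    (f := toLin' M) fun u hu => by
      obtain ⟨c, hcu⟩ := h u
      have := LinearIndependent.pair_iff.mp hu c (-1) (by simp [hcu])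
      simp at this
  exact ⟨c, toLin'.injective (by rw [hc, map_smul, toLin'_one]; rfl)⟩

lemma exists_eq_smul_one_of_sum_conj_vecMulVec_eq {ι n : Type*} [Fintype ι] [Fintype n]
    [DecidableEq n] (A : ι → Matrix n n ℂ)
    (h : ∀ u : n → ℂ, ∑ i, A i * vecMulVec u (star u) * (A i)ᴴ = vecMulVec u (star u))
    (i : ι) : ∃ c : ℂ, A i = c • 1 := by
  refine exists_eq_smul_one_of_forall_mulVec _ fun u => exists_eq_smul_of_forall_orthogonal
    fun w hw => ?_
  have hquad := congrArg (fun P => star w ⬝ᵥ (P *ᵥ w)) (h u)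
  simp only [mul_vecMulVec_mul_conjTranspose, sum_mulVec, dotProduct_sum,
    star_dotProduct_vecMulVec_self_mulVec, hw, mul_zero] at hquad
  exact congrFun (dotProduct_star_self_eq_zero.mp hquad) i

lemma isState_inv_smul_vecMulVec {n : Type*} [Fintype n] {u : n → ℂ} (hu : u ≠ 0) :
    IsState ((star u ⬝ᵥ u)⁻¹ • vecMulVec u (star u)) := by
  refine ⟨(posSemidef_vecMulVec_self_star u).smul
    (inv_nonneg_of_nonneg (dotProduct_star_self_nonneg u)), ?_⟩
  rw [trace_smul, trace_vecMulVec, dotProduct_comm u, smul_eq_mul,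
    inv_mul_cancel₀ (dotProduct_star_self_eq_zero.not.mpr hu)]

lemma sum_conj_vecMulVec_eq_of_forall_isState {ι n : Type*} [Fintype ι] [Fintype n]
    (A : ι → Matrix n n ℂ) (h : ∀ ρ, IsState ρ → ∑ i, A i * ρ * (A i)ᴴ = ρ) (u : n → ℂ) :
    ∑ i, A i * vecMulVec u (star u) * (A i)ᴴ = vecMulVec u (star u) := by
  rcases eq_or_ne u 0 with rfl | hu
  · simp
  have hstate := h _ (isState_inv_smul_vecMulVec hu)
  simp only [Matrix.mul_smul, Matrix.smul_mul, ← Finset.smul_sum] at hstate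
  exact smul_right_injective _ (inv_ne_zero (dotProduct_star_self_eq_zero.not.mpr hu)) hstate

def condKraus {mA mB : Type*} [Fintype mB] (K : Matrix (mA × mB) (mA × mB) ℂ) (ν : mB → ℂ)
    (b : mB) : Matrix mA mA ℂ :=
  of fun x a => ∑ c, K (x, b) (a, c) * ν c

lemma kraus_kronecker_vecMulVec_apply {mA mB : Type*} [Fintype mA] [Fintype mB]
    (K : Matrix (mA × mB) (mA × mB) ℂ) (X : Matrix mA mA ℂ) (ν : mB → ℂ) (x y : mA) (b b' : mB) :
    (K * (X ⊗ₖ vecMulVec ν (star ν)) * Kᴴ) (x, b) (y, b') =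
      (condKraus K ν b * X * (condKraus K ν b')ᴴ) x y := by
  simp only [condKraus, mul_apply, kroneckerMap_apply, conjTranspose_apply, of_apply,
    vecMulVec_apply, Pi.star_apply, Fintype.sum_prod_type, Finset.sum_mul, Finset.mul_sum,
    star_sum, star_mul']
  refine Finset.sum_congr rfl fun a _ => Finset.sum_congr rfl fun c _ => ?_
  refine Finset.sum_congr rfl fun a' _ => Finset.sum_congr rfl fun c' _ => ?_
  ring

lemma ptraceB_sum {ι mA mB : Type*} [Fintype ι] [Fintype mB]
    (M : ι → Matrix (mA × mB) (mA × mB) ℂ) : ptraceB (∑ i, M i) = ∑ i, ptraceB (M i) := by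
  ext x y
  simp only [ptraceB, Matrix.sum_apply, of_apply]
  exact Finset.sum_comm

lemma ptraceB_kronecker_s5 {mA mB : Type*} [Fintype mB] (X : Matrix mA mA ℂ) (S : Matrix mB mB ℂ) :
    ptraceB (X ⊗ₖ S) = S.trace • X := by
  ext x y
  simp [ptraceB, trace, Finset.mul_sum, mul_comm]

lemma ptraceB_kraus_kronecker_vecMulVec {mA mB : Type*} [Fintype mA] [Fintype mB]
    (K : Matrix (mA × mB) (mA × mB) ℂ) (X : Matrix mA mA ℂ) (ν : mB → ℂ) :
    ptraceB (K * (X ⊗ₖ vecMulVec ν (star ν)) * Kᴴ) =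
      ∑ b, condKraus K ν b * X * (condKraus K ν b)ᴴ := by
  ext x y
  simp only [ptraceB, of_apply, kraus_kronecker_vecMulVec_apply, Matrix.sum_apply]

lemma kraus_kronecker_vecMulVec_of_condKraus_eq_smul {mA mB : Type*} [Fintype mA]
    [DecidableEq mA] [Fintype mB] (K : Matrix (mA × mB) (mA × mB) ℂ) (X : Matrix mA mA ℂ)
    (ν c : mB → ℂ) (hc : ∀ b, condKraus K ν b = c b • 1) :
    K * (X ⊗ₖ vecMulVec ν (star ν)) * Kᴴ = X ⊗ₖ vecMulVec c (star c) := by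
  ext ⟨x, b⟩ ⟨y, b'⟩
  rw [kraus_kronecker_vecMulVec_apply, hc, hc]
  simp [conjTranspose_smul, vecMulVec_apply]
  ring

theorem stmt_5_general {mA mB : Type*} [Fintype mA] [DecidableEq mA] [Fintype mB]
    (N : Matrix (mA × mB) (mA × mB) ℂ →ₗ[ℂ] Matrix (mA × mB) (mA × mB) ℂ)
    (hN : IsCPTP N)
    (ν : mB → ℂ) (hν : star ν ⬝ᵥ ν = 1)
    (ξ : Matrix mB mB ℂ) (hξ : ξ = Matrix.vecMulVec ν (star ν))
    (hid : ∀ ρ : Matrix mA mA ℂ, IsState ρ → ptraceB (N (ρ ⊗ₖ ξ)) = ρ) :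
    ∃ σ : Matrix mB mB ℂ, IsState σ ∧
      ∀ ρ : Matrix mA mA ℂ, IsState ρ → N (ρ ⊗ₖ ξ) = ρ ⊗ₖ σ := by
  obtain ⟨-, k, K, hK⟩ := hN
  subst hξ
  have hfix : ∀ ρ, IsState ρ → ∑ p : Fin k × mB,
      condKraus (K p.1) ν p.2 * ρ * (condKraus (K p.1) ν p.2)ᴴ = ρ := fun ρ hρ => by
    have := hid ρ hρ
    simp only [hK, ptraceB_sum, ptraceB_kraus_kronecker_vecMulVec] at this
    rwa [Fintype.sum_prod_type]
  have hscalar := exists_eq_smul_one_of_sum_conj_vecMulVec_eq _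
    (sum_conj_vecMulVec_eq_of_forall_isState _ hfix)
  choose c hc using fun (i : Fin k) (b : mB) =>
    (hscalar (i, b) : ∃ c : ℂ, condKraus (K i) ν b = c • 1)
  set σ := ∑ i, vecMulVec (c i) (star (c i))
  have hout : ∀ X, N (X ⊗ₖ vecMulVec ν (star ν)) = X ⊗ₖ σ := fun X => by
    change _ = kroneckerBilinear (R := ℂ) X σ
    rw [hK, map_sum]
    exact Finset.sum_congr rfl fun i _ =>
      kraus_kronecker_vecMulVec_of_condKraus_eq_smul _ X ν _ (hc i)
  by_cases hstate : ∃ ρ : Matrix mA mA ℂ, IsState ρ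
  · obtain ⟨ρ, hρ⟩ := hstate
    refine ⟨σ, ⟨posSemidef_sum _ fun i _ => posSemidef_vecMulVec_self_star _, ?_⟩,
      fun ρ _ => hout ρ⟩
    have htr := congrArg trace (hid ρ hρ)
    rwa [hout, ptraceB_kronecker_s5, trace_smul, hρ.2, smul_eq_mul, mul_one] at htr
  · have hν0 : ν ≠ 0 := by rintro rfl; simp at hν
    refine ⟨_, by simpa [hν] using isState_inv_smul_vecMulVec hν0,
      fun ρ hρ => (hstate ⟨ρ, hρ⟩).elim⟩

/-- If the induced channel on A is the identity, the environment output is a fixed state. -/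
theorem stmt_5 {mA mB : Type*} [Fintype mA] [DecidableEq mA] [Fintype mB] [DecidableEq mB]
    (N : Matrix (mA × mB) (mA × mB) ℂ →ₗ[ℂ] Matrix (mA × mB) (mA × mB) ℂ)
    (hN : IsCPTP N)
    (ν : mB → ℂ) (hν : star ν ⬝ᵥ ν = 1)
    (ξ : Matrix mB mB ℂ) (hξ : ξ = Matrix.vecMulVec ν (star ν))
    (hid : ∀ ρ : Matrix mA mA ℂ, IsState ρ → ptraceB (N (ρ ⊗ₖ ξ)) = ρ) :
    ∃ σ : Matrix mB mB ℂ, IsState σ ∧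
      ∀ ρ : Matrix mA mA ℂ, IsState ρ → N (ρ ⊗ₖ ξ) = ρ ⊗ₖ σ :=
  stmt_5_general N hN ν hν ξ hξ hid
end
end
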